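/- Let V be a finite-dimensional vector space over K = GF(2) and f : V → V nilpotent, with V = ⟨u_1⟩ ⊕ ⟨u_2⟩, e(u_1) = R, e(u_2) = S, and R + 1 < S. Let s, q be integers with 0 < s < q and 0 ≤ R − s < S − q, and set z = f^{R−s}(u_1) + f^{S−q}(u_2). Then X = ⟨z⟩^c is characteristic and not hyperinvariant, and X = ⟨z⟩ + ⟨f^{R−s+1}(u_1)⟩ + ⟨f^{S−q+1}(u_2)⟩. -/

import Mathlib

open Module LinearMap

section Defs

variable {K V : Type*} [Field K] [AddCommGroup V] [Module K V]

/-- `α` commutes with `f`. -/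
def Commutes (f : V →ₗ[K] V) (α : V ≃ₗ[K] V) : Prop :=
  ∀ v, α (f v) = f (α v)

/-- `X` is hyperinvariant: invariant under every endomorphism commuting with `f`. -/
def Hyperinv (f : V →ₗ[K] V) (X : Submodule K V) : Prop :=
  ∀ g : V →ₗ[K] V, (∀ v, g (f v) = f (g v)) → ∀ x ∈ X, g x ∈ X

/-- `X` is characteristic: `f`-invariant and invariant under every automorphism
commuting with `f`. -/
def Charinv (f : V →ₗ[K] V) (X : Submodule K V) : Prop :=
  (∀ x ∈ X, f x ∈ X) ∧ ∀ α : V ≃ₗ[K] V, Commutes f α → ∀ x ∈ X, α x ∈ X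

/-- The characteristic hull of a set `B`: the subspace spanned by all
`f^i (α b)`, `b ∈ B`, `α` an automorphism commuting with `f`. -/
def charHull (f : V →ₗ[K] V) (B : Set V) : Submodule K V :=
  Submodule.span K
    {y | ∃ b ∈ B, ∃ i : ℕ, ∃ α : V ≃ₗ[K] V, Commutes f α ∧ y = (f ^ i) (α b)}

/-- The `f`-cyclic subspace generated by `x`. -/
def cyc (f : V →ₗ[K] V) (x : V) : Submodule K V :=
  Submodule.span K (Set.range fun i : ℕ => (f ^ i) x)

/-- The `f`-invariant span of a set `B`. -/
def invSpan (f : V →ₗ[K] V) (B : Set V) : Submodule K V :=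
  Submodule.span K {y | ∃ b ∈ B, ∃ i : ℕ, y = (f ^ i) b}

/-- The exponent of `x`: the least `ℓ` with `f^ℓ x = 0`. -/
noncomputable def expnt (f : V →ₗ[K] V) (x : V) : ℕ :=
  sInf {ℓ : ℕ | (f ^ ℓ) x = 0}

/-- The height of `x`: the largest `q` with `x ∈ f^q V`. -/
noncomputable def hgt (f : V →ₗ[K] V) (x : V) : ℕ :=
  sSup {q : ℕ | x ∈ LinearMap.range (f ^ q)}

/-- `u` is a generator of `V`: `V = ⟨u⟩ ⊕ V₂` for some `f`-invariant `V₂`. -/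
def IsGenerator (f : V →ₗ[K] V) (u : V) : Prop :=
  u ≠ 0 ∧ ∃ V₂ : Submodule K V, (∀ x ∈ V₂, f x ∈ V₂) ∧ IsCompl (cyc f u) V₂

/-- `(u 0, …, u (m-1))` is a generator tuple of `V`:
`V = ⟨u 0⟩ ⊕ ⋯ ⊕ ⟨u (m-1)⟩` with nondecreasing exponents. -/
def IsGenTuple {m : ℕ} (f : V →ₗ[K] V) (u : Fin m → V) : Prop :=
  DirectSum.IsInternal (fun i => cyc f (u i)) ∧ Monotone fun i => expnt f (u i)

/-- The Ulm invariant `d(f,r) = dim ((ker f ⊓ f^{r-1} V) / (ker f ⊓ f^r V))`. -/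
noncomputable def ulm (f : V →ₗ[K] V) (r : ℕ) : ℕ :=
  Module.finrank K
    (↥(LinearMap.ker f ⊓ LinearMap.range (f ^ (r - 1))) ⧸
      Submodule.comap (LinearMap.ker f ⊓ LinearMap.range (f ^ (r - 1))).subtype
        (LinearMap.ker f ⊓ LinearMap.range (f ^ r)))

/-- The largest hyperinvariant subspace contained in `X`
(the sum of all hyperinvariant subspaces contained in `X`). -/
noncomputable def largestHyperinv (f : V →ₗ[K] V) (X : Submodule K V) : Submodule K V :=
  sSup {W : Submodule K V | Hyperinv f W ∧ W ≤ X}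

end Defs

/-!
Write `z = f^r u₁ + f^t u₂` with `r = R - s`, `t = S - q`. The projections `π₁`, `π₂` onto the
two cyclic summands commute with `f`, so `1 + f π₁` and `1 + f π₂` are automorphisms commuting
with `f`; they move `z` by `f^(r+1) u₁` and `f^(t+1) u₂`, which therefore lie in `⟨z⟩^c`.
Conversely, over `GF(2)` an automorphism `α` commuting with `f` satisfies
`α u₁ ≡ u₁ mod f⟨u₁⟩ + ⟨f^(S-R) u₂⟩` (otherwise `u₁ ∈ f V`) and `α u₂ ≡ u₂ mod ⟨u₁⟩ + f⟨u₂⟩`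
(otherwise `α` kills `f^(S-1) u₂`), which puts `α z - z` in `⟨f^(r+1) u₁⟩ + ⟨f^(t+1) u₂⟩`.
Finally `π₁` commutes with `f` but maps `z` to `f^r u₁`, which is not in `⟨z⟩^c`.
-/

section Cyclic

variable {K V : Type*} [Field K] [AddCommGroup V] [Module K V] {f : Module.End K V}

lemma pow_apply_mem_cyc (x : V) (i : ℕ) : (f ^ i) x ∈ cyc f x :=
  Submodule.subset_span ⟨i, rfl⟩

lemma mem_cyc_self (x : V) : x ∈ cyc f x := by
  simpa using pow_apply_mem_cyc (f := f) x 0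

lemma cyc_le {W : Submodule K V} (hW : W ∈ f.invtSubmodule) {x : V} (hx : x ∈ W) :
    cyc f x ≤ W := by
  refine Submodule.span_le.2 ?_
  rintro _ ⟨i, rfl⟩
  induction i with
  | zero => simpa using hx
  | succ i ih =>
    change (f ^ (i + 1)) x ∈ W
    rw [pow_succ', Module.End.mul_apply]
    exact hW ih

lemma cyc_mem_invtSubmodule (x : V) : cyc f x ∈ f.invtSubmodule := by
  refine Submodule.span_le.2 ?_
  rintro _ ⟨i, rfl⟩
  change f ((f ^ i) x) ∈ cyc f x
  rw [← Module.End.mul_apply, ← pow_succ']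
  exact pow_apply_mem_cyc x _

lemma map_cyc {g : Module.End K V} (hg : Commute f g) (x : V) :
    (cyc f x).map g = cyc f (g x) := by
  rw [cyc, Submodule.map_span, ← Set.range_comp]
  congr 2
  ext i
  exact (LinearMap.congr_fun ((hg.pow_left i).eq) x).symm

lemma pow_apply_mem_cyc_pow {x y : V} (hy : y ∈ cyc f x) (j : ℕ) :
    (f ^ j) y ∈ cyc f ((f ^ j) x) :=
  map_cyc (Commute.pow_self f j).symm x ▸ Submodule.mem_map_of_mem hy

lemma cyc_pow_le_cyc (x : V) (k : ℕ) : cyc f ((f ^ k) x) ≤ cyc f x :=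
  cyc_le (cyc_mem_invtSubmodule x) (pow_apply_mem_cyc x k)

lemma cyc_pow_le (x : V) {k m : ℕ} (h : k ≤ m) : cyc f ((f ^ m) x) ≤ cyc f ((f ^ k) x) := by
  refine cyc_le (cyc_mem_invtSubmodule _) ?_
  rw [← Nat.sub_add_cancel h, pow_add, Module.End.mul_apply]
  exact pow_apply_mem_cyc _ _

lemma pow_apply_mem_cyc_pow_of_le {x y : V} {i j k : ℕ} (hy : y ∈ cyc f ((f ^ i) x))
    (h : k ≤ j + i) : (f ^ j) y ∈ cyc f ((f ^ k) x) :=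
  cyc_pow_le x h (by simpa [← Module.End.mul_apply, ← pow_add] using pow_apply_mem_cyc_pow hy j)

lemma cyc_eq_span_sup (x : V) : cyc f x = K ∙ x ⊔ cyc f (f x) := by
  refine le_antisymm (Submodule.span_le.2 ?_) (sup_le ?_ ?_)
  · rintro _ ⟨_ | i, rfl⟩
    · exact Submodule.mem_sup_left (by simp [Submodule.mem_span_singleton_self])
    · refine Submodule.mem_sup_right ?_
      change (f ^ (i + 1)) x ∈ _
      rw [pow_succ, Module.End.mul_apply]
      exact pow_apply_mem_cyc _ _
  · exact (Submodule.span_singleton_le_iff_mem _ _).2 (mem_cyc_self x)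
  · exact cyc_le (cyc_mem_invtSubmodule x) (cyc_mem_invtSubmodule x (mem_cyc_self x))

lemma cyc_le_span_sup {W : Submodule K V} (hW : W ∈ f.invtSubmodule) {z : V} (hz : f z ∈ W) :
    cyc f z ≤ K ∙ z ⊔ W :=
  (cyc_eq_span_sup (f := f) z).trans_le (sup_le_sup_left (cyc_le hW hz) _)

lemma eq_bot_of_le_map (hf : IsNilpotent f) {C : Submodule K V} (h : C ≤ C.map f) : C = ⊥ := by
  obtain ⟨n, hn⟩ := hf
  have hpow : ∀ k, C ≤ C.map (f ^ k) := by
    intro k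
    induction k with
    | zero => simp [Module.End.one_eq_id]
    | succ k ih =>
      rw [pow_succ', Module.End.mul_eq_comp, Submodule.map_comp]
      exact h.trans (Submodule.map_mono ih)
  simpa [hn] using hpow n

/-- A Nakayama-type statement: `x` cannot lie in the cyclic subspace of `f x`. -/
lemma eq_zero_of_mem_cyc_apply (hf : IsNilpotent f) {x : V} (hx : x ∈ cyc f (f x)) : x = 0 := by
  have hle : cyc f x ≤ (cyc f x).map f := by
    rw [map_cyc (Commute.refl f)]
    exact cyc_le (cyc_mem_invtSubmodule _) hx
  simpa [eq_bot_of_le_map hf hle] using mem_cyc_self (f := f) x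

lemma pow_expnt_apply (hf : IsNilpotent f) (x : V) : (f ^ expnt f x) x = 0 := by
  obtain ⟨n, hn⟩ := hf
  exact Nat.sInf_mem (s := {ℓ | (f ^ ℓ) x = 0}) ⟨n, by simp [hn]⟩

lemma pow_apply_ne_zero_of_lt_expnt {x : V} {j : ℕ} (h : j < expnt f x) : (f ^ j) x ≠ 0 :=
  Nat.notMem_of_lt_sInf h

lemma pow_apply_eq_zero_of_mem_cyc (hf : IsNilpotent f) {x y : V} (hy : y ∈ cyc f x) {j : ℕ}
    (h : expnt f x ≤ j) : (f ^ j) y = 0 := by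
  have hx : (f ^ j) x = 0 := by
    rw [← Nat.sub_add_cancel h, pow_add, Module.End.mul_apply, pow_expnt_apply hf, map_zero]
  simpa [hx, cyc] using pow_apply_mem_cyc_pow hy j

/-- In a cyclic subspace of exponent `e`, the kernel of `f ^ (e - n)` is `⟨f ^ n x⟩`. -/
lemma mem_cyc_pow_of_pow_apply_eq_zero (hf : IsNilpotent f) {x y : V} {n : ℕ}
    (hn : n ≤ expnt f x) (hy : y ∈ cyc f x) (h : (f ^ (expnt f x - n)) y = 0) :
    y ∈ cyc f ((f ^ n) x) := by
  induction n generalizing y with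
  | zero => simpa using hy
  | succ n ih =>
    rw [cyc_eq_span_sup, Submodule.mem_sup] at hy
    obtain ⟨_, hc, w, hw, rfl⟩ := hy
    obtain ⟨c, rfl⟩ := Submodule.mem_span_singleton.1 hc
    rw [← map_cyc (Commute.refl f)] at hw
    obtain ⟨w, hw, rfl⟩ := hw
    set k := expnt f x - (n + 1)
    have hc : c = 0 := by
      by_contra hc
      refine pow_apply_ne_zero_of_lt_expnt (f := f) (x := x) (j := k) (by omega)
        (eq_zero_of_mem_cyc_apply hf ?_)
      have hkw : (f ^ (k + 1)) w ∈ cyc f ((f ^ (k + 1)) x) := pow_apply_mem_cyc_pow hw _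
      rw [map_add, map_smul, ← Module.End.mul_apply, ← pow_succ, add_eq_zero_iff_eq_neg] at h
      rw [← (Submodule.smul_mem_iff _ hc), h, ← Module.End.mul_apply, ← pow_succ']
      exact Submodule.neg_mem _ hkw
    subst hc
    rw [zero_smul, zero_add, pow_succ', Module.End.mul_apply]
    have hw' : (f ^ (expnt f x - n)) w = 0 := by
      rwa [zero_smul, zero_add, ← Module.End.mul_apply, ← pow_succ,
        show k + 1 = expnt f x - n by omega] at h
    simpa using pow_apply_mem_cyc_pow (ih (by omega) hw hw') 1

end Cyclic

section CharacteristicHull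

variable {K V : Type*} [Field K] [AddCommGroup V] [Module K V] {f : Module.End K V}

lemma Commutes.commute {α : V ≃ₗ[K] V} (hα : Commutes f α) : Commute f (α : Module.End K V) :=
  LinearMap.ext fun v => (hα v).symm

lemma Commutes.refl (f : Module.End K V) : Commutes f (LinearEquiv.refl K V) := fun _ => rfl

lemma Commutes.symm {α : V ≃ₗ[K] V} (hα : Commutes f α) : Commutes f α.symm := fun v =>
  α.injective (by rw [α.apply_symm_apply, hα, α.apply_symm_apply])

lemma Commutes.apply_pow_apply {α : V ≃ₗ[K] V} (hα : Commutes f α) (n : ℕ) (v : V) :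
    α ((f ^ n) v) = (f ^ n) (α v) :=
  (LinearMap.congr_fun ((hα.commute.pow_left n).eq) v).symm

lemma apply_mem_charHull {B : Set V} {b : V} (hb : b ∈ B) {α : V ≃ₗ[K] V} (hα : Commutes f α) :
    α b ∈ charHull f B :=
  Submodule.subset_span ⟨b, hb, 0, α, hα, by simp⟩

lemma charHull_le {B : Set V} {Y : Submodule K V} (hY : Y ∈ f.invtSubmodule)
    (h : ∀ α : V ≃ₗ[K] V, Commutes f α → ∀ b ∈ B, α b ∈ Y) : charHull f B ≤ Y := by
  refine Submodule.span_le.2 ?_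
  rintro _ ⟨b, hb, i, α, hα, rfl⟩
  exact cyc_le hY (h α hα b hb) (pow_apply_mem_cyc _ i)

lemma charinv_charHull (B : Set V) : Charinv f (charHull f B) := by
  refine ⟨fun x hx => ?_, fun α hα x hx => ?_⟩
  · induction hx using Submodule.span_induction with
    | mem y hy =>
      obtain ⟨b, hb, i, β, hβ, rfl⟩ := hy
      refine Submodule.subset_span ⟨b, hb, i + 1, β, hβ, ?_⟩
      rw [pow_succ', Module.End.mul_apply]
    | zero => simp
    | add x y _ _ hx hy => rw [map_add]; exact add_mem hx hy
    | smul c x _ hx => rw [map_smul]; exact Submodule.smul_mem _ _ hx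
  · induction hx using Submodule.span_induction with
    | mem y hy =>
      obtain ⟨b, hb, i, β, hβ, rfl⟩ := hy
      refine Submodule.subset_span ⟨b, hb, i, β ≪≫ₗ α, fun v => ?_, ?_⟩
      · rw [LinearEquiv.trans_apply, LinearEquiv.trans_apply, hβ, hα]
      · exact hα.apply_pow_apply i (β b)
    | zero => simp
    | add x y _ _ hx hy => rw [map_add]; exact add_mem hx hy
    | smul c x _ hx => rw [map_smul]; exact Submodule.smul_mem _ _ hx

/-- For nilpotent `f`, every `g` commuting with `f` gives the automorphism `1 + f g`. -/
lemma exists_commutes_apply_eq_add (hf : IsNilpotent f) {g : Module.End K V}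
    (hg : Commute f g) : ∃ α : V ≃ₗ[K] V, Commutes f α ∧ ∀ v, α v = v + f (g v) := by
  have hunit : IsUnit (1 + f * g) := (hg.isNilpotent_mul_right hf).isUnit_one_add
  refine ⟨LinearMap.GeneralLinearGroup.toLinearEquiv hunit.unit, fun v => ?_, fun v => rfl⟩
  exact LinearMap.congr_fun
    (((Commute.one_right f).add_right ((Commute.refl f).mul_right hg)).eq).symm v

lemma commute_projection {p q : Submodule K V} (hpq : IsCompl p q) (hp : p ∈ f.invtSubmodule)
    (hq : q ∈ f.invtSubmodule) : Commute f (p.projection q hpq) :=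
  ((Submodule.isIdempotentElem_projection hpq).commute_iff.2
    ⟨by rwa [Submodule.range_projection], by rwa [Submodule.ker_projection]⟩).symm

lemma projection_apply_add {p q : Submodule K V} (hpq : IsCompl p q) {a b : V} (ha : a ∈ p)
    (hb : b ∈ q) : p.projection q hpq (a + b) = a := by
  rw [map_add, Submodule.projection_apply_of_mem_left hpq ha,
    Submodule.projection_apply_of_mem_right hpq hb, add_zero]

lemma apply_apply_mem_charHull (hf : IsNilpotent f) {g : Module.End K V} (hg : Commute f g)
    {B : Set V} {z : V} (hz : z ∈ B) : f (g z) ∈ charHull f B := by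
  obtain ⟨α, hα, hαv⟩ := exists_commutes_apply_eq_add hf hg
  have h := sub_mem (apply_mem_charHull hz hα) (apply_mem_charHull hz (Commutes.refl f))
  rwa [hαv, LinearEquiv.refl_apply, add_sub_cancel_left] at h

end CharacteristicHull

section TwoCyclicSummands

variable {K V : Type*} [Field K] [AddCommGroup V] [Module K V] {f : Module.End K V}

lemma eq_zero_of_mem_range_of_isCompl (hf : IsNilpotent f) {u : V} {W : Submodule K V}
    (hcompl : IsCompl (cyc f u) W) (hW : W ∈ f.invtSubmodule) (hu : u ∈ range f) : u = 0 := by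
  obtain ⟨w, rfl⟩ := hu
  set π := (cyc f _).projection W hcompl
  have hπ : Commute f π := commute_projection hcompl (cyc_mem_invtSubmodule _) hW
  have hfw : f (π w) = f w := by
    rw [← Module.End.mul_apply, hπ.eq, Module.End.mul_apply,
      Submodule.projection_apply_of_mem_left hcompl (mem_cyc_self _)]
  have h := Submodule.mem_map_of_mem (f := f) (Submodule.projection_apply_mem hcompl w)
  rw [hfw, map_cyc (Commute.refl f)] at h
  exact eq_zero_of_mem_cyc_apply hf h

variable {u₁ u₂ : V}

lemma pow_apply_notMem_of_isCompl (hf : IsNilpotent f) (hcompl : IsCompl (cyc f u₁) (cyc f u₂))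
    {r t : ℕ} (hr : r < expnt f u₁) (ht : t < expnt f u₂) :
    (f ^ r) u₁ ∉ cyc f ((f ^ r) u₁ + (f ^ t) u₂) ⊔ cyc f ((f ^ (r + 1)) u₁) ⊔
      cyc f ((f ^ (t + 1)) u₂) := by
  intro hmem
  set z := (f ^ r) u₁ + (f ^ t) u₂
  set W := cyc f ((f ^ (r + 1)) u₁) ⊔ cyc f ((f ^ (t + 1)) u₂)
  have hzW : f z ∈ W := by
    rw [map_add, ← Module.End.mul_apply, ← pow_succ', ← Module.End.mul_apply, ← pow_succ']
    exact add_mem (Submodule.mem_sup_left (mem_cyc_self _))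
      (Submodule.mem_sup_right (mem_cyc_self _))
  -- Modulo `W` the subspace is spanned by `z`; the two projections exclude `c = 0` and `c ≠ 0`.
  have hle : cyc f z ⊔ cyc f ((f ^ (r + 1)) u₁) ⊔ cyc f ((f ^ (t + 1)) u₂) ≤ K ∙ z ⊔ W :=
    sup_le (sup_le (cyc_le_span_sup (Module.End.invtSubmodule.sup_mem
      (cyc_mem_invtSubmodule _) (cyc_mem_invtSubmodule _)) hzW) (le_sup_left.trans le_sup_right))
      (le_sup_right.trans le_sup_right)
  obtain ⟨_, hc, _, hw, hsum⟩ := Submodule.mem_sup.1 (hle hmem)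
  obtain ⟨c, rfl⟩ := Submodule.mem_span_singleton.1 hc
  obtain ⟨w₁, hw₁, w₂, hw₂, rfl⟩ := Submodule.mem_sup.1 hw
  have hA : c • (f ^ r) u₁ + w₁ ∈ cyc f u₁ :=
    add_mem (Submodule.smul_mem _ _ (pow_apply_mem_cyc _ _)) (cyc_pow_le_cyc _ _ hw₁)
  have hB : c • (f ^ t) u₂ + w₂ ∈ cyc f u₂ :=
    add_mem (Submodule.smul_mem _ _ (pow_apply_mem_cyc _ _)) (cyc_pow_le_cyc _ _ hw₂)
  rw [show c • z + (w₁ + w₂) = (c • (f ^ r) u₁ + w₁) + (c • (f ^ t) u₂ + w₂) by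
    simp only [z, smul_add]; abel] at hsum
  by_cases hc : c = 0
  · have h₁ := congr_arg ((cyc f u₁).projection (cyc f u₂) hcompl) hsum
    rw [projection_apply_add hcompl hA hB,
      Submodule.projection_apply_of_mem_left hcompl (pow_apply_mem_cyc _ _), hc, zero_smul,
      zero_add] at h₁
    rw [h₁, pow_succ', Module.End.mul_apply] at hw₁
    exact pow_apply_ne_zero_of_lt_expnt hr (eq_zero_of_mem_cyc_apply hf hw₁)
  · have h₂ := congr_arg ((cyc f u₂).projection (cyc f u₁) hcompl.symm) hsum
    rw [add_comm (c • _ + w₁), projection_apply_add hcompl.symm hB hA,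
      Submodule.projection_apply_of_mem_right hcompl.symm (pow_apply_mem_cyc _ _),
      add_eq_zero_iff_eq_neg] at h₂
    have h := Submodule.neg_mem _ hw₂
    rw [← h₂, Submodule.smul_mem_iff _ hc, pow_succ', Module.End.mul_apply] at h
    exact pow_apply_ne_zero_of_lt_expnt ht (eq_zero_of_mem_cyc_apply hf h)

lemma not_hyperinv_of_isCompl (hf : IsNilpotent f) (hcompl : IsCompl (cyc f u₁) (cyc f u₂))
    {r t : ℕ} (hr : r < expnt f u₁) (ht : t < expnt f u₂) :
    ¬ Hyperinv f (cyc f ((f ^ r) u₁ + (f ^ t) u₂) ⊔ cyc f ((f ^ (r + 1)) u₁) ⊔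
      cyc f ((f ^ (t + 1)) u₂)) := by
  intro hY
  have hπ₁ : Commute f ((cyc f u₁).projection (cyc f u₂) hcompl) :=
    commute_projection hcompl (cyc_mem_invtSubmodule _) (cyc_mem_invtSubmodule _)
  have h := hY ((cyc f u₁).projection (cyc f u₂) hcompl)
    (fun v => (LinearMap.congr_fun hπ₁.eq v).symm) _
    (Submodule.mem_sup_left (Submodule.mem_sup_left (mem_cyc_self _)))
  rw [projection_apply_add hcompl (pow_apply_mem_cyc _ r) (pow_apply_mem_cyc _ t)] at h
  exact pow_apply_notMem_of_isCompl hf hcompl hr ht h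

end TwoCyclicSummands

section OverGF2

variable {V : Type*} [AddCommGroup V] [Module (ZMod 2) V] {f : Module.End (ZMod 2) V}

lemma mem_or_sub_mem_cyc_apply {x v : V} (hv : v ∈ cyc f x) :
    v ∈ cyc f (f x) ∨ v - x ∈ cyc f (f x) := by
  rw [cyc_eq_span_sup, Submodule.mem_sup] at hv
  obtain ⟨_, hc, w, hw, rfl⟩ := hv
  obtain ⟨c, rfl⟩ := Submodule.mem_span_singleton.1 hc
  rcases (by decide : ∀ c : ZMod 2, c = 0 ∨ c = 1) c with rfl | rfl
  · left; simpa using hw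
  · right; simpa using hw

variable {u₁ u₂ : V}

lemma Commutes.apply_sub_mem_of_isCompl_left (hf : IsNilpotent f)
    (hcompl : IsCompl (cyc f u₁) (cyc f u₂)) (hlt : expnt f u₁ < expnt f u₂)
    {α : V ≃ₗ[ZMod 2] V} (hα : Commutes f α) :
    α u₁ - u₁ ∈ cyc f (f u₁) ⊔ cyc f ((f ^ (expnt f u₂ - expnt f u₁)) u₂) := by
  set π₁ := (cyc f u₁).projection (cyc f u₂) hcompl
  set π₂ := (cyc f u₂).projection (cyc f u₁) hcompl.symm
  have hsplit : α u₁ = π₁ (α u₁) + π₂ (α u₁) :=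
    (Submodule.projection_add_projection_eq_self hcompl _).symm
  have hπ₂ : Commute f π₂ :=
    commute_projection hcompl.symm (cyc_mem_invtSubmodule _) (cyc_mem_invtSubmodule _)
  have h₂ : π₂ (α u₁) ∈ cyc f ((f ^ (expnt f u₂ - expnt f u₁)) u₂) := by
    refine mem_cyc_pow_of_pow_apply_eq_zero hf (by omega)
      (Submodule.projection_apply_mem hcompl.symm _) ?_
    rw [show expnt f u₂ - (expnt f u₂ - expnt f u₁) = expnt f u₁ by omega,
      ← Module.End.mul_apply, (hπ₂.pow_left _).eq, Module.End.mul_apply,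
      ← hα.apply_pow_apply, pow_expnt_apply hf, map_zero, map_zero]
  rcases mem_or_sub_mem_cyc_apply (Submodule.projection_apply_mem hcompl (α u₁)) with h₁ | h₁
  · have hrange : α u₁ ∈ range f := by
      have hle : cyc f ((f ^ (expnt f u₂ - expnt f u₁)) u₂) ≤ cyc f (f u₂) := by
        simpa using cyc_pow_le (f := f) u₂ (k := 1) (by omega)
      rw [← map_cyc (Commute.refl f)] at h₁ hle
      rw [hsplit]
      exact add_mem (LinearMap.map_le_range h₁) (LinearMap.map_le_range (hle h₂))
    obtain ⟨w, hw⟩ := hrange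
    have hu₁ : u₁ = 0 := eq_zero_of_mem_range_of_isCompl hf hcompl (cyc_mem_invtSubmodule _)
      ⟨α.symm w, by rw [← hα.symm, hw, α.symm_apply_apply]⟩
    simp [hu₁]
  · rw [hsplit, add_sub_right_comm]
    exact add_mem (Submodule.mem_sup_left h₁) (Submodule.mem_sup_right h₂)

lemma Commutes.apply_sub_mem_of_isCompl_right (hf : IsNilpotent f)
    (hcompl : IsCompl (cyc f u₁) (cyc f u₂)) (hlt : expnt f u₁ < expnt f u₂)
    {α : V ≃ₗ[ZMod 2] V} (hα : Commutes f α) :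
    α u₂ - u₂ ∈ cyc f u₁ ⊔ cyc f (f u₂) := by
  set π₁ := (cyc f u₁).projection (cyc f u₂) hcompl
  set π₂ := (cyc f u₂).projection (cyc f u₁) hcompl.symm
  have hsplit : α u₂ = π₁ (α u₂) + π₂ (α u₂) :=
    (Submodule.projection_add_projection_eq_self hcompl _).symm
  rcases mem_or_sub_mem_cyc_apply (Submodule.projection_apply_mem hcompl.symm (α u₂)) with h₂ | h₂
  · exfalso
    have hS : (f ^ (expnt f u₂ - 1)) (α u₂) = 0 := by
      rw [← map_cyc (Commute.refl f)] at h₂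
      obtain ⟨y, hy, hfy⟩ := h₂
      rw [hsplit, map_add, ← hfy, ← Module.End.mul_apply (f ^ _) f, ← pow_succ,
        pow_apply_eq_zero_of_mem_cyc hf (Submodule.projection_apply_mem hcompl _) (by omega),
        pow_apply_eq_zero_of_mem_cyc hf hy (by omega), add_zero]
    refine pow_apply_ne_zero_of_lt_expnt (f := f) (x := u₂) (j := expnt f u₂ - 1) (by omega) ?_
    rwa [← hα.apply_pow_apply, LinearEquiv.map_eq_zero_iff] at hS
  · rw [hsplit, add_sub_assoc]
    exact add_mem (Submodule.mem_sup_left (Submodule.projection_apply_mem hcompl _))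
      (Submodule.mem_sup_right h₂)

lemma Commutes.apply_sub_self_mem_of_isCompl (hf : IsNilpotent f)
    (hcompl : IsCompl (cyc f u₁) (cyc f u₂)) {r t : ℕ} (hrt : r < t)
    (hts : t + expnt f u₁ < r + expnt f u₂) {α : V ≃ₗ[ZMod 2] V} (hα : Commutes f α) :
    α ((f ^ r) u₁ + (f ^ t) u₂) - ((f ^ r) u₁ + (f ^ t) u₂) ∈
      cyc f ((f ^ (r + 1)) u₁) ⊔ cyc f ((f ^ (t + 1)) u₂) := by
  have hlt : expnt f u₁ < expnt f u₂ := by omega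
  obtain ⟨a, ha, b, hb, hab⟩ :=
    Submodule.mem_sup.1 (hα.apply_sub_mem_of_isCompl_left hf hcompl hlt)
  obtain ⟨c, hc, d, hd, hcd⟩ :=
    Submodule.mem_sup.1 (hα.apply_sub_mem_of_isCompl_right hf hcompl hlt)
  have hsplit : α ((f ^ r) u₁ + (f ^ t) u₂) - ((f ^ r) u₁ + (f ^ t) u₂) =
      (f ^ r) (α u₁ - u₁) + (f ^ t) (α u₂ - u₂) := by
    rw [map_add, hα.apply_pow_apply, hα.apply_pow_apply, map_sub, map_sub]
    abel
  rw [hsplit, ← hab, ← hcd, map_add, map_add]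
  refine add_mem (add_mem (Submodule.mem_sup_left ?_) (Submodule.mem_sup_right ?_))
    (add_mem (Submodule.mem_sup_left ?_) (Submodule.mem_sup_right ?_))
  · exact pow_apply_mem_cyc_pow_of_le (i := 1) (by rwa [pow_one]) le_rfl
  · exact pow_apply_mem_cyc_pow_of_le hb (by omega)
  · exact pow_apply_mem_cyc_pow_of_le (i := 0) (by rwa [pow_zero, Module.End.one_apply]) (by omega)
  · exact pow_apply_mem_cyc_pow_of_le (i := 1) (by rwa [pow_one]) le_rfl

lemma charHull_eq_of_isCompl (hf : IsNilpotent f) (hcompl : IsCompl (cyc f u₁) (cyc f u₂))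
    {r t : ℕ} (hrt : r < t) (hts : t + expnt f u₁ < r + expnt f u₂) :
    charHull f {(f ^ r) u₁ + (f ^ t) u₂} =
      cyc f ((f ^ r) u₁ + (f ^ t) u₂) ⊔ cyc f ((f ^ (r + 1)) u₁) ⊔ cyc f ((f ^ (t + 1)) u₂) := by
  set z := (f ^ r) u₁ + (f ^ t) u₂ with hz
  have hu₁ : (f ^ r) u₁ ∈ cyc f u₁ := pow_apply_mem_cyc _ _
  have hu₂ : (f ^ t) u₂ ∈ cyc f u₂ := pow_apply_mem_cyc _ _
  refine le_antisymm (charHull_le ?_ fun α hα b hb => ?_) (sup_le (sup_le ?_ ?_) ?_)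
  · exact Module.End.invtSubmodule.sup_mem (Module.End.invtSubmodule.sup_mem
      (cyc_mem_invtSubmodule _) (cyc_mem_invtSubmodule _)) (cyc_mem_invtSubmodule _)
  · rw [Set.mem_singleton_iff.1 hb, ← sub_add_cancel (α z) z, sup_assoc]
    exact add_mem (Submodule.mem_sup_right (hα.apply_sub_self_mem_of_isCompl hf hcompl hrt hts))
      (Submodule.mem_sup_left (mem_cyc_self z))
  all_goals refine cyc_le (charinv_charHull _).1 ?_
  · simpa using apply_mem_charHull (Set.mem_singleton z) (Commutes.refl f)
  · have h := apply_apply_mem_charHull hf (commute_projection hcompl (cyc_mem_invtSubmodule _)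
      (cyc_mem_invtSubmodule _)) (Set.mem_singleton z)
    rwa [projection_apply_add hcompl hu₁ hu₂, ← Module.End.mul_apply, ← pow_succ'] at h
  · have h := apply_apply_mem_charHull hf (commute_projection hcompl.symm
      (cyc_mem_invtSubmodule _) (cyc_mem_invtSubmodule _)) (Set.mem_singleton z)
    have hπ₂z : (cyc f u₂).projection (cyc f u₁) hcompl.symm z = (f ^ t) u₂ := by
      rw [hz, add_comm, projection_apply_add hcompl.symm hu₂ hu₁]
    rwa [hπ₂z, ← Module.End.mul_apply, ← pow_succ'] at h

end OverGF2

theorem stmt11_general (V : Type*) [AddCommGroup V] [Module (ZMod 2) V]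
    (f : V →ₗ[ZMod 2] V) (hf : IsNilpotent f)
    (u₁ u₂ : V) (R S : ℕ) (hcompl : IsCompl (cyc f u₁) (cyc f u₂))
    (he₁ : expnt f u₁ = R) (he₂ : expnt f u₂ = S)
    (s q : ℕ) (hs : 0 < s) (hsq : s < q) (hsR : s ≤ R)
    (hlt : (R : ℤ) - s < (S : ℤ) - q) :
    Charinv f (charHull f {(f ^ (R - s)) u₁ + (f ^ (S - q)) u₂}) ∧
      ¬ Hyperinv f (charHull f {(f ^ (R - s)) u₁ + (f ^ (S - q)) u₂}) ∧
      charHull f {(f ^ (R - s)) u₁ + (f ^ (S - q)) u₂} =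
        cyc f ((f ^ (R - s)) u₁ + (f ^ (S - q)) u₂) ⊔
          cyc f ((f ^ (R - s + 1)) u₁) ⊔ cyc f ((f ^ (S - q + 1)) u₂) := by
  subst he₁ he₂
  have hX := charHull_eq_of_isCompl hf hcompl (r := expnt f u₁ - s) (t := expnt f u₂ - q)
    (by omega) (by omega)
  refine ⟨charinv_charHull _, ?_, hX⟩
  rw [hX]
  exact not_hyperinv_of_isCompl hf hcompl (by omega) (by omega)

theorem stmt11 (V : Type*) [AddCommGroup V] [Module (ZMod 2) V]
    [FiniteDimensional (ZMod 2) V] (f : V →ₗ[ZMod 2] V) (hf : IsNilpotent f)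
    (u₁ u₂ : V) (R S : ℕ) (hcompl : IsCompl (cyc f u₁) (cyc f u₂))
    (he₁ : expnt f u₁ = R) (he₂ : expnt f u₂ = S) (hRS : R + 1 < S)
    (s q : ℕ) (hs : 0 < s) (hsq : s < q) (hsR : s ≤ R)
    (hlt : (R : ℤ) - s < (S : ℤ) - q) :
    Charinv f (charHull f {(f ^ (R - s)) u₁ + (f ^ (S - q)) u₂}) ∧
      ¬ Hyperinv f (charHull f {(f ^ (R - s)) u₁ + (f ^ (S - q)) u₂}) ∧
      charHull f {(f ^ (R - s)) u₁ + (f ^ (S - q)) u₂} =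
        cyc f ((f ^ (R - s)) u₁ + (f ^ (S - q)) u₂) ⊔
          cyc f ((f ^ (R - s + 1)) u₁) ⊔ cyc f ((f ^ (S - q + 1)) u₂) :=
  stmt11_general V f hf u₁ u₂ R S hcompl he₁ he₂ s q hs hsq hsR hlt
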